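/- arXiv:1904.00258 — 6 statements merged into one kernel-verified Lean document; each statement's English description precedes it below -/
import Mathlib

section
/- Let l > 0, A ∈ ℝ with A ≠ 0, and let F : [0,l] → ℝ be continuous. Define the Green's function G₀(x,ξ) = (1 − e^{Aξ})(1 − e^{A(x−l)}) / (A(e^{Aξ} − e^{A(ξ−l)})) for 0 ≤ ξ ≤ x and G₀(x,ξ) = (1 − e^{A(ξ−l)})(1 − e^{Ax}) / (A(e^{Aξ} − e^{A(ξ−l)})) for x ≤ ξ ≤ l, and set τ(x) = ∫_0^l G₀(x,ξ) F(ξ) dξ. Then τ(0) = 0, τ(l) = 0, τ is twice differentiable on (0,l), and τ''(x) − A τ'(x) = F(x) for all x ∈ (0,l). -/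
open Real Set intervalIntegral

/-- Green's function representation of the solution of the two-point boundary value
problem `τ'' - Aτ' = F` on `(0,l)` with `τ(0) = τ(l) = 0`. -/
theorem greens_function_representation
    (l A : ℝ) (hl : 0 < l) (hA : A ≠ 0)
    (F : ℝ → ℝ) (hF : ContinuousOn F (Icc 0 l))
    (G : ℝ → ℝ → ℝ)
    (hG : ∀ x ξ : ℝ, G x ξ =
      if ξ ≤ x then
        (1 - Real.exp (A * ξ)) * (1 - Real.exp (A * (x - l))) /
          (A * (Real.exp (A * ξ) - Real.exp (A * (ξ - l))))
      else
        (1 - Real.exp (A * (ξ - l))) * (1 - Real.exp (A * x)) /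
          (A * (Real.exp (A * ξ) - Real.exp (A * (ξ - l)))))
    (τ : ℝ → ℝ)
    (hτ : ∀ x : ℝ, τ x = ∫ ξ in (0 : ℝ)..l, G x ξ * F ξ) :
    τ 0 = 0 ∧ τ l = 0 ∧
    ∀ x ∈ Ioo (0 : ℝ) l,
      DifferentiableAt ℝ τ x ∧ DifferentiableAt ℝ (deriv τ) x ∧
      deriv (deriv τ) x - A * deriv τ x = F x := by
  have hAl : A * l ≠ 0 := mul_ne_zero hA (ne_of_gt hl)
  have hE1 : Real.exp (-(A * l)) ≠ 1 := fun h => hAl (by simpa using (Real.exp_eq_one_iff _).mp h)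
  have hE : 1 - Real.exp (-(A * l)) ≠ 0 := sub_ne_zero.mpr (Ne.symm hE1)
  set c : ℝ := (A * (1 - Real.exp (-(A * l))))⁻¹ with hcdef
  set f : ℝ → ℝ := fun ξ => (Real.exp (-(A * ξ)) - 1) * F ξ with hfdef
  set g : ℝ → ℝ := fun ξ => (Real.exp (-(A * ξ)) - Real.exp (-(A * l))) * F ξ with hgdef
  have e1 : ∀ ξ : ℝ, Real.exp (A * (ξ - l)) = Real.exp (A * ξ) * Real.exp (-(A * l)) := by
    intro ξ; rw [← Real.exp_add]; ring_nf
  have hd : ∀ ξ : ℝ, Real.exp (A * ξ) - Real.exp (A * ξ) * Real.exp (-(A * l)) ≠ 0 := by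
    intro ξ
    have h2 : Real.exp (A * ξ) - Real.exp (A * ξ) * Real.exp (-(A * l)) =
        Real.exp (A * ξ) * (1 - Real.exp (-(A * l))) := by ring
    rw [h2]; exact mul_ne_zero (Real.exp_ne_zero _) hE
  -- the two branch identities
  have hb1 : ∀ x ξ : ℝ, ξ ≤ x → G x ξ * F ξ = c * (1 - Real.exp (A * (x - l))) * f ξ := by
    intro x ξ hle
    rw [hG, if_pos hle]
    simp only [hfdef]
    have := hd ξ
    rw [e1 ξ, Real.exp_neg (A * ξ), hcdef]
    field_simp
  have hb2 : ∀ x ξ : ℝ, x ≤ ξ → G x ξ * F ξ = c * (1 - Real.exp (A * x)) * g ξ := by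
    intro x ξ hle
    rw [hG]
    simp only [hgdef]
    have hdd := hd ξ
    split_ifs with h
    · have hxe : ξ = x := le_antisymm h hle
      subst hxe
      rw [e1 ξ, Real.exp_neg (A * ξ), hcdef]
      field_simp
    · rw [e1 ξ, Real.exp_neg (A * ξ), hcdef]
      field_simp
  -- continuity of f and g on [0,l]
  have hf_cont : ContinuousOn f (Icc 0 l) := by
    apply ContinuousOn.mul _ hF
    exact ((Real.continuous_exp.comp (continuous_const.mul continuous_id).neg).sub
      continuous_const).continuousOn
  have hg_cont : ContinuousOn g (Icc 0 l) := by
    apply ContinuousOn.mul _ hF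
    exact ((Real.continuous_exp.comp (continuous_const.mul continuous_id).neg).sub
      continuous_const).continuousOn
  set P : ℝ → ℝ := fun x => ∫ ξ in (0:ℝ)..x, f ξ with hPdef
  set R : ℝ → ℝ := fun x => ∫ ξ in (0:ℝ)..x, g ξ with hRdef
  set C : ℝ := ∫ ξ in (0:ℝ)..l, g ξ with hCdef
  set σ : ℝ → ℝ := fun x =>
    c * ((1 - Real.exp (A * (x - l))) * P x + (1 - Real.exp (A * x)) * (C - R x)) with hσdef
  -- τ = σ on [0,l]
  have hστ : ∀ x ∈ Icc (0:ℝ) l, τ x = σ x := by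
    intro x hx
    have hsub1 : uIcc (0:ℝ) x ⊆ Icc 0 l := by
      rw [uIcc_of_le hx.1]; exact Icc_subset_Icc le_rfl hx.2
    have hsub2 : uIcc x l ⊆ Icc 0 l := by
      rw [uIcc_of_le hx.2]; exact Icc_subset_Icc hx.1 le_rfl
    have heq1 : EqOn (fun ξ => G x ξ * F ξ)
        (fun ξ => c * (1 - Real.exp (A * (x - l))) * f ξ) (uIcc 0 x) := by
      intro ξ hξ
      rw [uIcc_of_le hx.1] at hξ
      exact hb1 x ξ hξ.2
    have heq2 : EqOn (fun ξ => G x ξ * F ξ)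
        (fun ξ => c * (1 - Real.exp (A * x)) * g ξ) (uIcc x l) := by
      intro ξ hξ
      rw [uIcc_of_le hx.2] at hξ
      exact hb2 x ξ hξ.1
    have hcont1 : ContinuousOn (fun ξ => G x ξ * F ξ) (uIcc 0 x) :=
      ContinuousOn.congr (continuousOn_const.mul (hf_cont.mono hsub1)) heq1
    have hcont2 : ContinuousOn (fun ξ => G x ξ * F ξ) (uIcc x l) :=
      ContinuousOn.congr (continuousOn_const.mul (hg_cont.mono hsub2)) heq2
    have hint1 : IntervalIntegrable (fun ξ => G x ξ * F ξ) MeasureTheory.volume 0 x :=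
      hcont1.intervalIntegrable
    have hint2 : IntervalIntegrable (fun ξ => G x ξ * F ξ) MeasureTheory.volume x l :=
      hcont2.intervalIntegrable
    have hg1 : IntervalIntegrable g MeasureTheory.volume 0 x :=
      (hg_cont.mono hsub1).intervalIntegrable
    have hg2 : IntervalIntegrable g MeasureTheory.volume x l :=
      (hg_cont.mono hsub2).intervalIntegrable
    have hQ : (∫ ξ in x..l, g ξ) = C - R x := by
      rw [hCdef, hRdef, ← intervalIntegral.integral_add_adjacent_intervals hg1 hg2]; ring
    rw [hτ, ← intervalIntegral.integral_add_adjacent_intervals hint1 hint2,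
      intervalIntegral.integral_congr heq1, intervalIntegral.integral_congr heq2,
      intervalIntegral.integral_const_mul, intervalIntegral.integral_const_mul, hQ, hσdef]
    simp only [hPdef]
    ring
  -- boundary values
  have hτ0 : τ 0 = 0 := by
    rw [hστ 0 (left_mem_Icc.mpr hl.le), hσdef]
    simp [hPdef]
  have hτl : τ l = 0 := by
    rw [hστ l (right_mem_Icc.mpr hl.le), hσdef]
    simp [hRdef, hCdef]
  refine ⟨hτ0, hτl, ?_⟩
  -- the explicit first derivative
  set σ₁ : ℝ → ℝ := fun y =>
    c * (-(A * Real.exp (A * (y - l))) * P y + -(A * Real.exp (A * y)) * (C - R y)) with hσ₁def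
  have key : ∀ x ∈ Ioo (0:ℝ) l, HasDerivAt τ (σ₁ x) x := by
    intro x hx
    have hxI : Icc (0:ℝ) l ∈ nhds x := Icc_mem_nhds hx.1 hx.2
    have hmea : MeasurableSet (Ioo (0:ℝ) l) := measurableSet_Ioo
    have hsubf : uIcc (0:ℝ) x ⊆ Icc 0 l := by
      rw [uIcc_of_le hx.1.le]; exact Icc_subset_Icc le_rfl hx.2.le
    have hPd : HasDerivAt P (f x) x := by
      rw [hPdef]
      apply intervalIntegral.integral_hasDerivAt_right
        (hf_cont.mono hsubf).intervalIntegrable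
        ⟨Ioo 0 l, Ioo_mem_nhds hx.1 hx.2,
          (hf_cont.mono Ioo_subset_Icc_self).aestronglyMeasurable hmea⟩
        (hf_cont.continuousAt hxI)
    have hRd : HasDerivAt R (g x) x := by
      rw [hRdef]
      apply intervalIntegral.integral_hasDerivAt_right
        (hg_cont.mono hsubf).intervalIntegrable
        ⟨Ioo 0 l, Ioo_mem_nhds hx.1 hx.2,
          (hg_cont.mono Ioo_subset_Icc_self).aestronglyMeasurable hmea⟩
        (hg_cont.continuousAt hxI)
    have hu1 : HasDerivAt (fun y : ℝ => A * (y - l)) A x := by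
      simpa using ((hasDerivAt_id x).sub_const l).const_mul A
    have hv1 : HasDerivAt (fun y : ℝ => A * y) A x := by
      simpa using (hasDerivAt_id x).const_mul A
    have hu : HasDerivAt (fun y => 1 - Real.exp (A * (y - l)))
        (-(Real.exp (A * (x - l)) * A)) x :=
      (((Real.hasDerivAt_exp _).comp x hu1)).const_sub 1
    have hv : HasDerivAt (fun y => 1 - Real.exp (A * y)) (-(Real.exp (A * x) * A)) x :=
      (((Real.hasDerivAt_exp _).comp x hv1)).const_sub 1
    have hσd : HasDerivAt σ
        (c * ((-(Real.exp (A * (x - l)) * A)) * P x + (1 - Real.exp (A * (x - l))) * f x +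
          ((-(Real.exp (A * x) * A)) * (C - R x) + (1 - Real.exp (A * x)) * (-(g x))) )) x := by
      rw [hσdef]
      exact ((hu.mul hPd).add (hv.mul (hRd.const_sub C))).const_mul c
    have hcancel : (1 - Real.exp (A * (x - l))) * f x = (1 - Real.exp (A * x)) * g x := by
      simp only [hfdef, hgdef]
      rw [e1 x, Real.exp_neg (A * x)]
      field_simp
    have hσd' : HasDerivAt σ (σ₁ x) x := by
      convert hσd using 1
      rw [hσ₁def]
      simp only
      linear_combination (-c) * hcancel
    exact hσd'.congr_of_eventuallyEq (Filter.eventuallyEq_of_mem hxI hστ)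
  intro x hx
  have hIoo : Ioo (0:ℝ) l ∈ nhds x := Ioo_mem_nhds hx.1 hx.2
  have hxI : Icc (0:ℝ) l ∈ nhds x := Icc_mem_nhds hx.1 hx.2
  have hmea : MeasurableSet (Ioo (0:ℝ) l) := measurableSet_Ioo
  have hsubf : uIcc (0:ℝ) x ⊆ Icc 0 l := by
    rw [uIcc_of_le hx.1.le]; exact Icc_subset_Icc le_rfl hx.2.le
  have hPd : HasDerivAt P (f x) x := by
    rw [hPdef]
    apply intervalIntegral.integral_hasDerivAt_right
      (hf_cont.mono hsubf).intervalIntegrable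
      ⟨Ioo 0 l, hIoo, (hf_cont.mono Ioo_subset_Icc_self).aestronglyMeasurable hmea⟩
      (hf_cont.continuousAt hxI)
  have hRd : HasDerivAt R (g x) x := by
    rw [hRdef]
    apply intervalIntegral.integral_hasDerivAt_right
      (hg_cont.mono hsubf).intervalIntegrable
      ⟨Ioo 0 l, hIoo, (hg_cont.mono Ioo_subset_Icc_self).aestronglyMeasurable hmea⟩
      (hg_cont.continuousAt hxI)
  have hu1 : HasDerivAt (fun y : ℝ => A * (y - l)) A x := by
    simpa using ((hasDerivAt_id x).sub_const l).const_mul A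
  have hv1 : HasDerivAt (fun y : ℝ => A * y) A x := by
    simpa using (hasDerivAt_id x).const_mul A
  have hu : HasDerivAt (fun y => -(A * Real.exp (A * (y - l))))
      (-(A * (Real.exp (A * (x - l)) * A))) x :=
    ((((Real.hasDerivAt_exp _).comp x hu1)).const_mul A).neg
  have hv : HasDerivAt (fun y => -(A * Real.exp (A * y)))
      (-(A * (Real.exp (A * x) * A))) x :=
    ((((Real.hasDerivAt_exp _).comp x hv1)).const_mul A).neg
  have hσ₁d : HasDerivAt σ₁
      (c * ((-(A * (Real.exp (A * (x - l)) * A))) * P x + (-(A * Real.exp (A * (x - l)))) * f x +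
        ((-(A * (Real.exp (A * x) * A))) * (C - R x) +
          (-(A * Real.exp (A * x))) * (-(g x))))) x := by
    rw [hσ₁def]
    exact ((hu.mul hPd).add (hv.mul (hRd.const_sub C))).const_mul c
  have hev2 : deriv τ =ᶠ[nhds x] σ₁ :=
    Filter.eventuallyEq_of_mem hIoo (fun y hy => (key y hy).deriv)
  have hτ2 : HasDerivAt (deriv τ)
      (c * ((-(A * (Real.exp (A * (x - l)) * A))) * P x + (-(A * Real.exp (A * (x - l)))) * f x +
        ((-(A * (Real.exp (A * x) * A))) * (C - R x) +
          (-(A * Real.exp (A * x))) * (-(g x))))) x :=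
    hσ₁d.congr_of_eventuallyEq hev2
  have hτd := key x hx
  refine ⟨hτd.differentiableAt, hτ2.differentiableAt, ?_⟩
  rw [hτ2.deriv, hτd.deriv, hσ₁def]
  have hfin : c * (-(A * Real.exp (A * (x - l))) * f x + A * Real.exp (A * x) * g x) = F x := by
    simp only [hfdef, hgdef]
    rw [e1 x, Real.exp_neg (A * x), hcdef]
    field_simp
    ring
  simp only
  linear_combination hfin
end

section
/- Let 0 < α ≤ 1, β > 0, c ∈ ℝ, and define E(t) = ∑_{j=0}^∞ (−c)^j t^{αj} / Γ(αj + β) for t > 0, where Γ is the Euler Gamma function. Then t^{1−α} · E'(t) tends to −cα / Γ(α + β) as t → 0⁺. -/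
/-!
Writing `E_{α,β}(z) = ∑ z^j / Γ(αj + β)`, the hypothesis says `E(t) = E_{α,β}(-c t^α)` for
`t > 0`. Comparing slopes of the convex function `log Γ` on `[x - 1, x]` and `[x, x + α]` gives
`Γ(x + α) ≥ (x - 1)^α Γ(x)`, so by the ratio test `E_{α,β}` is an entire power series. The chain
rule gives `t^{1-α} E'(t) = -cα E_{α,β}'(-c t^α)`, which tends to
`-cα E_{α,β}'(0) = -cα / Γ(α + β)` by continuity of `E_{α,β}'`.
-/

open Real Set Filter Topology

theorem Real.Gamma_mul_sub_one_rpow_le_Gamma_add {x a : ℝ} (hx : 1 < x) (ha : 0 < a) :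
    Gamma x * (x - 1) ^ a ≤ Gamma (x + a) := by
  have hx0 : 0 < x := by linarith
  have hxa : 0 < x + a := by linarith
  have hslope := (convexOn_iff_slope_mono_adjacent.mp convexOn_log_Gamma).2
    (mem_Ioi.2 (sub_pos.2 hx)) (mem_Ioi.2 hxa) (by linarith : x - 1 < x) (by linarith : x < x + a)
  have hrec : Gamma x = (x - 1) * Gamma (x - 1) := by
    simpa using Gamma_add_one (sub_pos.2 hx).ne'
  have hlog : log (Gamma x) - log (Gamma (x - 1)) = log (x - 1) := by
    rw [hrec, log_mul (sub_pos.2 hx).ne' (Gamma_pos_of_pos (sub_pos.2 hx)).ne']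
    ring
  simp only [Function.comp, sub_sub_cancel, div_one, add_sub_cancel_left, hlog,
    le_div_iff₀ ha] at hslope
  have := exp_le_exp.2 (show log (Gamma x) + log (x - 1) * a ≤ log (Gamma (x + a)) by linarith)
  rwa [exp_add, exp_log (Gamma_pos_of_pos hx0), exp_log (Gamma_pos_of_pos hxa),
    ← rpow_def_of_pos (sub_pos.2 hx)] at this

theorem summable_pow_div_Gamma_mul_add {α : ℝ} (hα : 0 < α) (β q : ℝ) :
    Summable fun j : ℕ => q ^ j / Gamma (α * j + β) := by
  have hx : Tendsto (fun j : ℕ => α * j + β) atTop atTop :=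
    tendsto_atTop_add_const_right _ _ (tendsto_natCast_atTop_atTop.const_mul_atTop hα)
  have hgrowth : Tendsto (fun j : ℕ => (α * j + β - 1) ^ α) atTop atTop :=
    (tendsto_rpow_atTop hα).comp (tendsto_atTop_add_const_right _ _ hx)
  refine summable_of_ratio_norm_eventually_le one_half_lt_one ?_
  filter_upwards [hx.eventually_gt_atTop 1, hgrowth.eventually_ge_atTop (2 * |q|)]
    with j hj1 hjq
  have hΓ : 0 < Gamma (α * j + β) := Gamma_pos_of_pos (by linarith)
  have hratio : 2 * |q| * Gamma (α * j + β) ≤ Gamma (α * ↑(j + 1) + β) := calc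
    2 * |q| * Gamma (α * j + β) ≤ Gamma (α * j + β) * (α * j + β - 1) ^ α := by
      rw [mul_comm]; gcongr
    _ ≤ Gamma (α * j + β + α) := Gamma_mul_sub_one_rpow_le_Gamma_add hj1 hα
    _ = Gamma (α * ↑(j + 1) + β) := by push_cast; ring_nf
  have hΓ' : 0 < Gamma (α * ↑(j + 1) + β) := Gamma_pos_of_pos (by push_cast; linarith)
  rw [norm_div, norm_div, norm_pow, norm_pow, Real.norm_of_nonneg hΓ.le,
    Real.norm_of_nonneg hΓ'.le, div_le_iff₀ hΓ', pow_succ]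
  calc ‖q‖ ^ j * ‖q‖
        = 1 / 2 * (‖q‖ ^ j / Gamma (α * j + β)) * (2 * |q| * Gamma (α * j + β)) := by
        rw [Real.norm_eq_abs]; field_simp
    _ ≤ 1 / 2 * (‖q‖ ^ j / Gamma (α * j + β)) * Gamma (α * ↑(j + 1) + β) := by gcongr

noncomputable def mittagLeffler (α β z : ℝ) : ℝ :=
  ∑' j : ℕ, z ^ j / Gamma (α * j + β)

noncomputable def mittagLefflerSeries (α β : ℝ) : FormalMultilinearSeries ℝ ℝ ℝ :=
  .ofScalars ℝ fun j : ℕ => (Gamma (α * j + β))⁻¹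

section

variable {α β : ℝ}

theorem mittagLefflerSeries_radius (hα : 0 < α) : (mittagLefflerSeries α β).radius = ⊤ :=
  FormalMultilinearSeries.radius_eq_top_of_summable_norm _ fun r => by
    simpa [mittagLefflerSeries, FormalMultilinearSeries.ofScalars_norm, div_eq_inv_mul]
      using (summable_pow_div_Gamma_mul_add hα β r).norm

theorem hasFPowerSeriesOnBall_mittagLeffler (hα : 0 < α) :
    HasFPowerSeriesOnBall (mittagLeffler α β) (mittagLefflerSeries α β) 0 ⊤ := by
  have hsum : (mittagLefflerSeries α β).sum = mittagLeffler α β := by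
    funext z
    refine (FormalMultilinearSeries.ofScalars_sum_eq _ z).trans (tsum_congr fun j => ?_)
    rw [smul_eq_mul, inv_mul_eq_div]
  simpa [hsum, mittagLefflerSeries_radius hα] using
    (mittagLefflerSeries α β).hasFPowerSeriesOnBall (by simp [mittagLefflerSeries_radius hα])

theorem deriv_mittagLeffler_zero (hα : 0 < α) :
    deriv (mittagLeffler α β) 0 = (Gamma (α + β))⁻¹ := by
  rw [(hasFPowerSeriesOnBall_mittagLeffler hα).hasFPowerSeriesAt.deriv]
  simp [mittagLefflerSeries]

theorem analyticAt_mittagLeffler (hα : 0 < α) (z : ℝ) :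
    AnalyticAt ℝ (mittagLeffler α β) z :=
  (hasFPowerSeriesOnBall_mittagLeffler hα).analyticAt_of_mem (by simp)

end

theorem mittagLeffler_weighted_deriv_limit_general
    (α β c : ℝ) (hα0 : 0 < α)
    (E : ℝ → ℝ)
    (hE : ∀ t : ℝ, 0 < t →
      E t = ∑' j : ℕ, (-c) ^ j * t ^ (α * j) / Real.Gamma (α * j + β)) :
    Tendsto (fun t : ℝ => t ^ (1 - α) * deriv E t)
      (𝓝[>] (0 : ℝ)) (𝓝 (-c * α / Real.Gamma (α + β))) := by
  set M := mittagLeffler α β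
  have hEM : ∀ t : ℝ, 0 < t → E t = M (-c * t ^ α) := fun t ht => by
    rw [hE t ht]
    refine tsum_congr fun j => ?_
    rw [mul_pow, rpow_mul ht.le, rpow_natCast]
  have hweighted : ∀ t : ℝ, 0 < t →
      t ^ (1 - α) * deriv E t = -c * α * deriv M (-c * t ^ α) := by
    intro t ht
    have hEt : E =ᶠ[𝓝 t] fun s => M (-c * s ^ α) :=
      eventually_of_mem (Ioi_mem_nhds ht) fun s hs => hEM s hs
    have hM : HasDerivAt (fun s => M (-c * s ^ α))
        (deriv M (-c * t ^ α) * (-c * (α * t ^ (α - 1)))) t :=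
      (analyticAt_mittagLeffler hα0 _).differentiableAt.hasDerivAt.comp t
        ((hasDerivAt_rpow_const (Or.inl ht.ne')).const_mul (-c))
    have hcancel : t ^ (1 - α) * t ^ (α - 1) = 1 := by
      rw [← rpow_add ht]; simp
    rw [hEt.deriv_eq, hM.deriv]
    linear_combination (-c * α * deriv M (-c * t ^ α)) * hcancel
  have hinner : Tendsto (fun t : ℝ => -c * t ^ α) (𝓝[>] 0) (𝓝 0) := by
    simpa [zero_rpow hα0.ne'] using
      ((continuousAt_rpow_const 0 α (Or.inr hα0.le)).tendsto.const_mul (-c)).mono_left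
        nhdsWithin_le_nhds
  rw [div_eq_mul_inv, ← deriv_mittagLeffler_zero hα0]
  refine Tendsto.congr' (eventually_nhdsWithin_of_forall fun t ht => (hweighted t ht).symm) ?_
  exact ((analyticAt_mittagLeffler hα0 0).deriv.continuousAt.tendsto.comp hinner).const_mul
    (-c * α)

/-- Limit of the weighted derivative of the Mittag-Leffler time factor:
for `E(t) = ∑_j (-c)^j t^{αj}/Γ(αj+β)` one has
`t^{1-α} E'(t) → -cα/Γ(α+β)` as `t → 0⁺`. -/
theorem mittagLeffler_weighted_deriv_limit
    (α β c : ℝ) (hα0 : 0 < α) (hα1 : α ≤ 1) (hβ : 0 < β)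
    (E : ℝ → ℝ)
    (hE : ∀ t : ℝ, 0 < t →
      E t = ∑' j : ℕ, (-c) ^ j * t ^ (α * j) / Real.Gamma (α * j + β)) :
    Tendsto (fun t : ℝ => t ^ (1 - α) * deriv E t)
      (𝓝[>] (0 : ℝ)) (𝓝 (-c * α / Real.Gamma (α + β))) :=
  mittagLeffler_weighted_deriv_limit_general α β c hα0 E hE
end

section
/- Let α > 0, β > 0, c ∈ ℝ, and define g(t) = ∑_{j=0}^∞ (−c)^j t^{αj+β−1} / Γ(αj + β) for t > 0, where Γ is the Euler Gamma function. Then for every t > 0, g is differentiable at t and g'(t) = ∑_{j=0}^∞ (−c)^j (αj + β − 1) t^{αj+β−2} / Γ(αj + β). -/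
/-!
Since `s / Γ(s + 1) = 1 / Γ(s)` for every real `s`, differentiating the `j`-th term of the
series with parameter `β` gives the `j`-th term with parameter `β - 1`; so it suffices to
justify termwise differentiation. Log-convexity of `Γ` compares the slope of `log Γ` on
`[x, x + α]` with its slope `log (x - 1)` on `[x - 1, x]`, giving `(x - 1)^α Γ(x) ≤ Γ(x + α)`.
Hence `∑ r^j / Γ(αj + β)` converges for every `r` by the ratio test, and on `[t/2, 2t]` it
dominates both series uniformly.
-/

open Real Set Filter Topology

namespace Real

-- Valid at the poles `s = 0, -1, -2, …` too, where Mathlib's `Gamma` is `0`.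
theorem div_Gamma_add_one (s : ℝ) : s / Gamma (s + 1) = (Gamma s)⁻¹ := by
  rcases eq_or_ne s 0 with rfl | hs
  · simp [Gamma_zero]
  · rw [Gamma_add_one hs, div_mul_cancel_left₀ hs]

theorem rpow_mul_Gamma_le_Gamma_add {x a : ℝ} (hx : 1 < x) (ha : 0 < a) :
    (x - 1) ^ a * Gamma x ≤ Gamma (x + a) := by
  have hx1 : 0 < x - 1 := by linarith
  have hΓ : Gamma x = (x - 1) * Gamma (x - 1) := by
    simpa using Gamma_add_one hx1.ne'
  have hslope := convexOn_log_Gamma.slope_mono_adjacent (mem_Ioi.2 hx1)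
    (mem_Ioi.2 (by linarith : 0 < x + a)) (sub_one_lt x) (lt_add_of_pos_right x ha)
  have hlog : log (Gamma x) - log (Gamma (x - 1)) = log (x - 1) := by
    rw [hΓ, log_mul hx1.ne' (Gamma_pos_of_pos hx1).ne', add_sub_cancel_right]
  simp only [Function.comp_apply, sub_sub_cancel, div_one, add_sub_cancel_left] at hslope
  rw [hlog, le_div_iff₀ ha] at hslope
  rw [← log_le_log_iff (by positivity) (Gamma_pos_of_pos (by linarith)),
    log_mul (by positivity) (Gamma_pos_of_pos (by linarith)).ne', log_rpow hx1]
  linarith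

theorem summable_pow_div_Gamma {α : ℝ} (hα : 0 < α) (β r : ℝ) :
    Summable fun j : ℕ ↦ r ^ j / Gamma (α * j + β) := by
  refine summable_of_ratio_norm_eventually_le one_half_lt_one ?_
  have hx : Tendsto (fun j : ℕ ↦ α * j + β) atTop atTop :=
    tendsto_atTop_add_const_right _ _ (tendsto_natCast_atTop_atTop.const_mul_atTop hα)
  have hgrowth : Tendsto (fun j : ℕ ↦ (α * j + β - 1) ^ α) atTop atTop :=
    (tendsto_rpow_atTop hα).comp (tendsto_atTop_add_const_right _ _ hx)
  filter_upwards [hx.eventually_gt_atTop 1, hgrowth.eventually_ge_atTop (2 * |r|)]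
    with j hx1 hr
  set x := α * j + β
  have hΓ : 0 < Gamma x := Gamma_pos_of_pos (by linarith)
  have hpow : 0 < (x - 1) ^ α := rpow_pos_of_pos (by linarith) α
  have hnext : α * ((j + 1 : ℕ) : ℝ) + β = x + α := by push_cast; ring
  rw [hnext, norm_div, norm_div, norm_pow, norm_pow, Real.norm_eq_abs, norm_of_nonneg hΓ.le,
    norm_of_nonneg (Gamma_pos_of_pos (by linarith)).le, pow_succ]
  calc |r| ^ j * |r| / Gamma (x + α)
      ≤ |r| ^ j * ((x - 1) ^ α / 2) / ((x - 1) ^ α * Gamma x) := by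
        gcongr
        · linarith
        · exact rpow_mul_Gamma_le_Gamma_add hx1 hα
    _ = 1 / 2 * (|r| ^ j / Gamma x) := by field_simp

end Real

noncomputable def mittagLefflerTerm (α β c : ℝ) (j : ℕ) (t : ℝ) : ℝ :=
  (-c) ^ j * t ^ (α * j + β - 1) / Gamma (α * j + β)

theorem mittagLefflerTerm_sub_one (α β c : ℝ) (j : ℕ) (t : ℝ) :
    mittagLefflerTerm α (β - 1) c j t =
      (-c) ^ j * (α * j + β - 1) * t ^ (α * j + β - 2) / Gamma (α * j + β) := by
  have hΓ := div_Gamma_add_one (α * j + β - 1)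
  rw [sub_add_cancel] at hΓ
  calc mittagLefflerTerm α (β - 1) c j t
      = (-c) ^ j * t ^ (α * j + β - 2) * (Gamma (α * j + β - 1))⁻¹ := by
        unfold mittagLefflerTerm
        ring_nf
    _ = _ := by rw [← hΓ]; ring

theorem hasDerivAt_mittagLefflerTerm (α β c : ℝ) (j : ℕ) {t : ℝ} (ht : t ≠ 0) :
    HasDerivAt (mittagLefflerTerm α β c j) (mittagLefflerTerm α (β - 1) c j t) t := by
  have h := ((hasDerivAt_rpow_const (p := α * j + β - 1) (Or.inl ht)).const_mul
    ((-c) ^ j)).div_const (Gamma (α * j + β))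
  refine h.congr_deriv ?_
  rw [mittagLefflerTerm_sub_one, sub_sub, one_add_one_eq_two, mul_assoc]

theorem norm_mittagLefflerTerm_le {α a b : ℝ} (hα : 0 ≤ α) (ha : 0 < a) (β c : ℝ) (j : ℕ)
    {x : ℝ} (hx : x ∈ Icc a b) :
    ‖mittagLefflerTerm α β c j x‖ ≤
      max (a ^ (β - 1)) (b ^ (β - 1)) * ‖(|c| * b ^ α) ^ j / Gamma (α * j + β)‖ := by
  have hx0 : 0 < x := ha.trans_le hx.1
  have hsplit : x ^ (α * j + β - 1) = (x ^ α) ^ j * x ^ (β - 1) := by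
    rw [add_sub_assoc, rpow_add hx0, rpow_mul hx0.le, rpow_natCast]
  have hpow : (x ^ α) ^ j ≤ (b ^ α) ^ j :=
    pow_le_pow_left₀ (rpow_nonneg hx0.le α) (rpow_le_rpow hx0.le hx.2 hα) j
  have hshift : x ^ (β - 1) ≤ max (a ^ (β - 1)) (b ^ (β - 1)) := by
    rcases le_total 0 (β - 1) with h | h
    · exact (rpow_le_rpow hx0.le hx.2 h).trans (le_max_right _ _)
    · exact (rpow_le_rpow_of_nonpos ha hx.1 h).trans (le_max_left _ _)
  unfold mittagLefflerTerm
  rw [hsplit]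
  have hb : 0 < b := hx0.trans_le hx.2
  simp only [norm_div, norm_mul, norm_pow, norm_neg, Real.norm_eq_abs, abs_abs,
    abs_of_pos (rpow_pos_of_pos hx0 _), abs_of_pos (rpow_pos_of_pos hb _)]
  calc |c| ^ j * ((x ^ α) ^ j * x ^ (β - 1)) / |Gamma (α * j + β)|
      ≤ |c| ^ j * ((b ^ α) ^ j * max (a ^ (β - 1)) (b ^ (β - 1))) / |Gamma (α * j + β)| := by
        gcongr
    _ = _ := by rw [mul_pow]; ring

theorem hasDerivAt_tsum_mittagLefflerTerm {α : ℝ} (hα : 0 < α) (β c : ℝ) {t : ℝ} (ht : 0 < t) :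
    HasDerivAt (fun x ↦ ∑' j, mittagLefflerTerm α β c j x)
      (∑' j, mittagLefflerTerm α (β - 1) c j t) t := by
  have hmem : t ∈ Ioo (t / 2) (2 * t) := ⟨by linarith, by linarith⟩
  have hmajorant (γ : ℝ) := (summable_pow_div_Gamma hα γ (|c| * (2 * t) ^ α)).norm.mul_left
    (max ((t / 2) ^ (γ - 1)) ((2 * t) ^ (γ - 1)))
  refine hasDerivAt_tsum_of_isPreconnected (hmajorant (β - 1)) isOpen_Ioo isPreconnected_Ioo
    (fun j x hx ↦ hasDerivAt_mittagLefflerTerm α β c j (by linarith [hx.1]))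
    (fun j x hx ↦ norm_mittagLefflerTerm_le hα.le (half_pos ht) _ c j (Ioo_subset_Icc_self hx))
    hmem ?_ hmem
  exact .of_norm_bounded (hmajorant β)
    fun j ↦ norm_mittagLefflerTerm_le hα.le (half_pos ht) β c j (Ioo_subset_Icc_self hmem)

theorem mittagLeffler_time_factor_deriv_general
    (α β c : ℝ) (hα : 0 < α)
    (g : ℝ → ℝ)
    (hg : ∀ t : ℝ, 0 < t →
      g t = ∑' j : ℕ, (-c) ^ j * t ^ (α * j + β - 1) / Real.Gamma (α * j + β)) :
    ∀ t : ℝ, 0 < t →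
      DifferentiableAt ℝ g t ∧
      deriv g t = ∑' j : ℕ, (-c) ^ j * (α * j + β - 1) * t ^ (α * j + β - 2) /
        Real.Gamma (α * j + β) := by
  intro t ht
  have hderiv := (hasDerivAt_tsum_mittagLefflerTerm hα β c ht).congr_of_eventuallyEq
    (eventually_of_mem (Ioi_mem_nhds ht) hg)
  exact ⟨hderiv.differentiableAt,
    hderiv.deriv.trans (tsum_congr fun j ↦ mittagLefflerTerm_sub_one α β c j t)⟩

/-- Term-by-term differentiability of `g(t) = t^{β-1} E_{α,β}(-c t^α)
= ∑_j (-c)^j t^{αj+β-1}/Γ(αj+β)` on `(0,∞)`. -/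
theorem mittagLeffler_time_factor_deriv
    (α β c : ℝ) (hα : 0 < α) (hβ : 0 < β)
    (g : ℝ → ℝ)
    (hg : ∀ t : ℝ, 0 < t →
      g t = ∑' j : ℕ, (-c) ^ j * t ^ (α * j + β - 1) / Real.Gamma (α * j + β)) :
    ∀ t : ℝ, 0 < t →
      DifferentiableAt ℝ g t ∧
      deriv g t = ∑' j : ℕ, (-c) ^ j * (α * j + β - 1) * t ^ (α * j + β - 2) /
        Real.Gamma (α * j + β) :=
  mittagLeffler_time_factor_deriv_general α β c hα g hg
end

section
/- Let l > 0, let τ : [0,l] → ℝ be continuously differentiable with τ(0) = 0, let P₁ : [0,l] → ℝ be continuous, and let P : [0,l] × [0,l] → ℝ be continuous such that for every fixed x ∈ [0,l] the function z ↦ P(x,z) is differentiable with ∂P/∂z(x,z) = −P₁(x)·P₁(z). Then ∫_0^l τ(x) ( ∫_0^x τ'(z) P(x,z) dz ) dx = ∫_0^l τ(x)² P(x,x) dx + (1/2) ( ∫_0^l τ(z) P₁(z) dz )². -/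
/-!
Integrating by parts in `z`, the multiplicative kernel turns the inner integral into
`τ(x) P(x,x) + P₁(x) Φ(x)` with `Φ(x) = ∫_0^x τ P₁` (the boundary term at `0` vanishes
since `τ(0) = 0`). What remains is `∫_0^l Φ' Φ = Φ(l)² / 2`, once more by integrating by parts.
-/

open Real Set intervalIntegral
open scoped Interval

theorem integral_deriv_mul_eq_of_hasDerivWithinAt_neg_const_mul
    {a b c : ℝ} {u u' v g : ℝ → ℝ}
    (hu : ∀ x ∈ [[a, b]], HasDerivWithinAt u (u' x) [[a, b]] x) (hu' : ContinuousOn u' [[a, b]])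
    (hv : ∀ x ∈ [[a, b]], HasDerivWithinAt v (-(c * g x)) [[a, b]] x)
    (hg : ContinuousOn g [[a, b]]) :
    ∫ x in a..b, u' x * v x = u b * v b - u a * v a + c * ∫ x in a..b, u x * g x := by
  have hibp := integral_mul_deriv_eq_deriv_mul_of_hasDerivWithinAt hv hu
    (hg.intervalIntegrable.const_mul c).neg hu'.intervalIntegrable
  have hgu : ∀ x, -(c * g x) * u x = -(c * (u x * g x)) := fun x => by ring
  simp only [mul_comm (u' _), hibp, hgu, integral_neg, integral_const_mul]
  ring

theorem integral_mul_primitive_eq_sq_div_two {a b : ℝ} {f : ℝ → ℝ}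
    (hf : ContinuousOn f [[a, b]]) :
    ∫ x in a..b, f x * ∫ t in a..x, f t = (∫ x in a..b, f x) ^ 2 / 2 := by
  have hΦ : ∀ x ∈ [[a, b]], HasDerivWithinAt (fun u => ∫ t in a..u, f t) (f x) [[a, b]] x := by
    intro x hx
    have : Fact (x ∈ [[a, b]]) := ⟨hx⟩
    exact integral_hasDerivWithinAt_right
      ((hf.mono (uIcc_subset_uIcc_left hx)).intervalIntegrable)
      (hf.stronglyMeasurableAtFilter_nhdsWithin measurableSet_uIcc x) (hf x hx)
  have hibp := integral_deriv_mul_eq_sub_of_hasDerivWithinAt hΦ hΦ hf.intervalIntegrable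
    hf.intervalIntegrable
  simp only [integral_same, mul_zero, sub_zero] at hibp
  have hsym : ∀ x, (f x * ∫ t in a..x, f t) + (∫ t in a..x, f t) * f x =
      2 * (f x * ∫ t in a..x, f t) := fun x => by ring
  simp only [hsym, integral_const_mul] at hibp
  rw [sq]
  linarith

/-- Integration-by-parts identity for a multiplicative kernel
(`∂P/∂z(x,z) = -P₁(x)P₁(z)`): for `τ ∈ C¹[0,l]` with `τ(0) = 0`,
`∫_0^l τ(x)(∫_0^x τ'(z)P(x,z)dz)dx = ∫_0^l τ(x)²P(x,x)dx + (1/2)(∫_0^l τP₁)²`. -/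
theorem energy_integral_kernel_P
    (l : ℝ) (hl : 0 < l)
    (τ τ' : ℝ → ℝ)
    (hτ' : ∀ x ∈ Icc (0 : ℝ) l, HasDerivWithinAt τ (τ' x) (Icc 0 l) x)
    (hτ'cont : ContinuousOn τ' (Icc 0 l))
    (h0 : τ 0 = 0)
    (P₁ : ℝ → ℝ) (hP₁ : ContinuousOn P₁ (Icc 0 l))
    (P : ℝ → ℝ → ℝ)
    (hPcont : ContinuousOn (fun p : ℝ × ℝ => P p.1 p.2) (Icc 0 l ×ˢ Icc 0 l))
    (hPz : ∀ x ∈ Icc (0 : ℝ) l, ∀ z ∈ Icc (0 : ℝ) l,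
      HasDerivWithinAt (fun z' => P x z') (-(P₁ x * P₁ z)) (Icc 0 l) z) :
    ∫ x in (0 : ℝ)..l, τ x * ∫ z in (0 : ℝ)..x, τ' z * P x z =
      (∫ x in (0 : ℝ)..l, (τ x) ^ 2 * P x x) +
        (1 / 2) * (∫ z in (0 : ℝ)..l, τ z * P₁ z) ^ 2 := by
  rw [← uIcc_of_le hl.le] at hτ' hτ'cont hP₁ hPcont hPz
  have hτ : ContinuousOn τ [[0, l]] := fun x hx => (hτ' x hx).continuousWithinAt
  have hinner : ∀ x ∈ [[0, l]], τ x * ∫ z in 0..x, τ' z * P x z =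
      τ x ^ 2 * P x x + τ x * P₁ x * ∫ z in 0..x, τ z * P₁ z := by
    intro x hx
    have hsub := uIcc_subset_uIcc_left hx
    rw [integral_deriv_mul_eq_of_hasDerivWithinAt_neg_const_mul
      (fun z hz => (hτ' z (hsub hz)).mono hsub) (hτ'cont.mono hsub)
      (fun z hz => (hPz x hx z (hsub hz)).mono hsub) (hP₁.mono hsub), h0]
    ring
  have hdiag : ContinuousOn (fun x => P x x) [[0, l]] :=
    hPcont.comp (continuous_id.prodMk continuous_id).continuousOn fun x hx => ⟨hx, hx⟩
  have hf : ContinuousOn (fun x => τ x * P₁ x) [[0, l]] := hτ.mul hP₁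
  have hprim : ContinuousOn (fun x => ∫ z in 0..x, τ z * P₁ z) [[0, l]] :=
    continuousOn_primitive_interval hf.integrableOn_uIcc
  rw [integral_congr hinner, integral_add, integral_mul_primitive_eq_sq_div_two hf]
  · ring
  · exact ((hτ.pow 2).mul hdiag).intervalIntegrable
  · exact (hf.mul hprim).intervalIntegrable
end

section
/- Let l > 0, γ₁ ∈ ℝ, γ₂ ≥ 0, γ₃ ≥ 0. Let τ : [0,l] → ℝ be continuously differentiable with τ(0) = 0 and τ(l) = 0. Let P, Q : [0,l] × [0,l] → ℝ be continuous, let P₁, Q₁ : [0,l] → ℝ be continuous, and assume that for all x, z ∈ [0,l]: ∂P/∂z(x,z) = −P₁(x)P₁(z), ∂Q/∂z(x,z) = −Q₁(x)Q₁(z), P(x,x) ≥ 0 and Q(x,x) ≤ 0. Then ∫_0^l τ(x) ( γ₁ τ'(x) + γ₂ ∫_0^x τ'(z) P(x,z) dz + γ₃ ∫_x^l τ'(z) Q(x,z) dz ) dx ≥ 0. -/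
/-!
Integrating by parts in `z` and using `τ(0) = 0`, the condition `∂_z P(x,z) = -P₁(x) P₁(z)` turns
`τ(x) ∫_0^x τ'(z) P(x,z) dz` into `τ(x)² P(x,x) + f(x) F(x)`, where `f = τ P₁` and `F` is its
primitive vanishing at `0`. Since `f F = (F²/2)'`, the `γ₂`-term integrates to
`γ₂ (∫_0^l τ² P(x,x) dx + F(l)²/2) ≥ 0`. The `γ₃`-term is the mirror image (using `τ(l) = 0` and
`Q(x,x) ≤ 0`), and the `γ₁`-term is `γ₁ (τ(l)² - τ(0)²)/2 = 0`.
-/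

open Set intervalIntegral
open MeasureTheory (volume)

theorem ContinuousOn.diag {α β : Type*} [TopologicalSpace α] [TopologicalSpace β] {s : Set α}
    {K : α → α → β} (hK : ContinuousOn (fun p : α × α => K p.1 p.2) (s ×ˢ s)) :
    ContinuousOn (fun x => K x x) s :=
  hK.comp (continuousOn_id.prodMk continuousOn_id) fun _ hx => ⟨hx, hx⟩

section Calculus

variable {a b : ℝ}

theorem ContinuousOn.continuousOn_primitive (hab : a ≤ b) {f : ℝ → ℝ}
    (hf : ContinuousOn f (Icc a b)) : ContinuousOn (fun x => ∫ z in a..x, f z) (Icc a b) :=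
  (continuousOn_primitive_interval' (hf.intervalIntegrable_of_Icc hab) left_mem_uIcc).mono
    Icc_subset_uIcc

theorem ContinuousOn.continuousOn_primitive_left (hab : a ≤ b) {f : ℝ → ℝ}
    (hf : ContinuousOn f (Icc a b)) : ContinuousOn (fun x => ∫ z in x..b, f z) (Icc a b) := by
  refine (continuousOn_primitive_interval_left ?_).mono Icc_subset_uIcc
  rw [uIcc_of_le hab]
  exact hf.integrableOn_Icc

theorem integral_mul_deriv_self_eq (hab : a ≤ b) {u u' : ℝ → ℝ} (hu : ContinuousOn u (Icc a b))
    (hderiv : ∀ x ∈ Ioo a b, HasDerivAt u (u' x) x) (hu' : IntervalIntegrable u' volume a b) :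
    ∫ x in a..b, u x * u' x = (u b ^ 2 - u a ^ 2) / 2 := by
  rw [← uIcc_of_le hab] at hu
  replace hderiv : ∀ x ∈ Ioo (min a b) (max a b), HasDerivAt u (u' x) x := by
    simpa only [min_eq_left hab, max_eq_right hab] using hderiv
  have h := integral_deriv_mul_eq_sub_of_hasDerivAt hu hu hderiv hderiv hu' hu'
  simp only [mul_comm (u' _), ← two_mul, integral_const_mul] at h
  linarith

theorem integral_mul_integral_right_eq_sq_div_two (hab : a ≤ b) {f : ℝ → ℝ}
    (hf : ContinuousOn f (Icc a b)) :
    ∫ x in a..b, f x * ∫ z in a..x, f z = (∫ x in a..b, f x) ^ 2 / 2 := by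
  have hprim : ContinuousOn (fun x => ∫ z in a..x, f z) (Icc a b) := hf.continuousOn_primitive hab
  have hderiv : ∀ x ∈ Ioo a b, HasDerivAt (fun x => ∫ z in a..x, f z) (f x) x := fun x hx =>
    integral_hasDerivAt_right
      ((hf.mono (Icc_subset_Icc_right hx.2.le)).intervalIntegrable_of_Icc hx.1.le)
      (hf.mono Ioo_subset_Icc_self |>.stronglyMeasurableAtFilter isOpen_Ioo x hx)
      (hf.continuousAt (Icc_mem_nhds hx.1 hx.2))
  simp only [mul_comm (f _)]
  rw [integral_mul_deriv_self_eq hab hprim hderiv (hf.intervalIntegrable_of_Icc hab),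
    integral_same]
  ring

theorem integral_mul_integral_left_eq_sq_div_two (hab : a ≤ b) {f : ℝ → ℝ}
    (hf : ContinuousOn f (Icc a b)) :
    ∫ x in a..b, f x * ∫ z in x..b, f z = (∫ x in a..b, f x) ^ 2 / 2 := by
  have hf_int : IntervalIntegrable f volume a b := hf.intervalIntegrable_of_Icc hab
  have htail : EqOn (fun x => f x * ∫ z in x..b, f z)
      (fun x => f x * (∫ z in a..b, f z) - f x * ∫ z in a..x, f z) (uIcc a b) := fun x hx => by
    dsimp only
    rw [← integral_interval_sub_left hf_int (hf_int.mono_set (uIcc_subset_uIcc_left hx)), mul_sub]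
  have hprim : ContinuousOn (fun x => ∫ z in a..x, f z) (Icc a b) := hf.continuousOn_primitive hab
  have hfF : IntervalIntegrable (fun x => f x * ∫ z in a..x, f z) volume a b :=
    (hf.mul hprim).intervalIntegrable_of_Icc hab
  rw [integral_congr htail, integral_sub (hf_int.mul_const _) hfF, integral_mul_const,
    integral_mul_integral_right_eq_sq_div_two hab hf]
  ring

theorem integral_deriv_mul_eq_sub_add_integral_mul (hab : a ≤ b) {u u' v φ : ℝ → ℝ} {c : ℝ}
    (hu : ∀ x ∈ Icc a b, HasDerivWithinAt u (u' x) (Icc a b) x)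
    (hu' : IntervalIntegrable u' volume a b)
    (hv : ∀ x ∈ Icc a b, HasDerivWithinAt v (-(c * φ x)) (Icc a b) x)
    (hφ : IntervalIntegrable φ volume a b) :
    ∫ x in a..b, u' x * v x = u b * v b - u a * v a + c * ∫ x in a..b, u x * φ x := by
  rw [← uIcc_of_le hab] at hu hv
  have hu_cont : ContinuousOn u (uIcc a b) := fun x hx => (hu x hx).continuousWithinAt
  have hv_cont : ContinuousOn v (uIcc a b) := fun x hx => (hv x hx).continuousWithinAt
  have hcφ : IntervalIntegrable (fun x => -(c * φ x)) volume a b := (hφ.const_mul c).neg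
  have h := integral_deriv_mul_eq_sub_of_hasDerivWithinAt hu hv hu' hcφ
  rw [integral_add (hu'.mul_continuousOn hv_cont) (hcφ.continuousOn_mul hu_cont)] at h
  simp only [mul_neg, integral_neg, mul_left_comm (u _), integral_const_mul] at h
  linarith

end Calculus

section MultiplicativeKernel

variable {a b : ℝ} {τ τ' κ : ℝ → ℝ} {K : ℝ → ℝ → ℝ}

theorem integral_deriv_mul_kernel_left_eq
    (hτ : ∀ z ∈ Icc a b, HasDerivWithinAt τ (τ' z) (Icc a b) z) (hτ' : ContinuousOn τ' (Icc a b))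
    (hκ : ContinuousOn κ (Icc a b))
    (hK : ∀ x ∈ Icc a b, ∀ z ∈ Icc a b, HasDerivWithinAt (K x) (-(κ x * κ z)) (Icc a b) z)
    (hτa : τ a = 0) {x : ℝ} (hx : x ∈ Icc a b) :
    ∫ z in a..x, τ' z * K x z = τ x * K x x + κ x * ∫ z in a..x, τ z * κ z := by
  have hsub : Icc a x ⊆ Icc a b := Icc_subset_Icc_right hx.2
  rw [integral_deriv_mul_eq_sub_add_integral_mul hx.1 (fun z hz => (hτ z (hsub hz)).mono hsub)
    ((hτ'.mono hsub).intervalIntegrable_of_Icc hx.1) (fun z hz => (hK x hx z (hsub hz)).mono hsub)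
    ((hκ.mono hsub).intervalIntegrable_of_Icc hx.1), hτa, zero_mul, sub_zero]

theorem integral_deriv_mul_kernel_right_eq
    (hτ : ∀ z ∈ Icc a b, HasDerivWithinAt τ (τ' z) (Icc a b) z) (hτ' : ContinuousOn τ' (Icc a b))
    (hκ : ContinuousOn κ (Icc a b))
    (hK : ∀ x ∈ Icc a b, ∀ z ∈ Icc a b, HasDerivWithinAt (K x) (-(κ x * κ z)) (Icc a b) z)
    (hτb : τ b = 0) {x : ℝ} (hx : x ∈ Icc a b) :
    ∫ z in x..b, τ' z * K x z = -(τ x * K x x) + κ x * ∫ z in x..b, τ z * κ z := by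
  have hsub : Icc x b ⊆ Icc a b := Icc_subset_Icc_left hx.1
  rw [integral_deriv_mul_eq_sub_add_integral_mul hx.2 (fun z hz => (hτ z (hsub hz)).mono hsub)
    ((hτ'.mono hsub).intervalIntegrable_of_Icc hx.2) (fun z hz => (hK x hx z (hsub hz)).mono hsub)
    ((hκ.mono hsub).intervalIntegrable_of_Icc hx.2), hτb, zero_mul, zero_sub]

theorem continuousOn_integral_deriv_mul_kernel_left (hab : a ≤ b)
    (hτ : ∀ z ∈ Icc a b, HasDerivWithinAt τ (τ' z) (Icc a b) z) (hτ' : ContinuousOn τ' (Icc a b))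
    (hκ : ContinuousOn κ (Icc a b))
    (hK : ∀ x ∈ Icc a b, ∀ z ∈ Icc a b, HasDerivWithinAt (K x) (-(κ x * κ z)) (Icc a b) z)
    (hKdiag : ContinuousOn (fun x => K x x) (Icc a b)) (hτa : τ a = 0) :
    ContinuousOn (fun x => ∫ z in a..x, τ' z * K x z) (Icc a b) := by
  have hτ_cont : ContinuousOn τ (Icc a b) := fun x hx => (hτ x hx).continuousWithinAt
  exact ((hτ_cont.mul hKdiag).add (hκ.mul ((hτ_cont.mul hκ).continuousOn_primitive hab))).congr
    fun x hx => integral_deriv_mul_kernel_left_eq hτ hτ' hκ hK hτa hx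

theorem continuousOn_integral_deriv_mul_kernel_right (hab : a ≤ b)
    (hτ : ∀ z ∈ Icc a b, HasDerivWithinAt τ (τ' z) (Icc a b) z) (hτ' : ContinuousOn τ' (Icc a b))
    (hκ : ContinuousOn κ (Icc a b))
    (hK : ∀ x ∈ Icc a b, ∀ z ∈ Icc a b, HasDerivWithinAt (K x) (-(κ x * κ z)) (Icc a b) z)
    (hKdiag : ContinuousOn (fun x => K x x) (Icc a b)) (hτb : τ b = 0) :
    ContinuousOn (fun x => ∫ z in x..b, τ' z * K x z) (Icc a b) := by
  have hτ_cont : ContinuousOn τ (Icc a b) := fun x hx => (hτ x hx).continuousWithinAt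
  exact ((hτ_cont.mul hKdiag).neg.add
    (hκ.mul ((hτ_cont.mul hκ).continuousOn_primitive_left hab))).congr
    fun x hx => integral_deriv_mul_kernel_right_eq hτ hτ' hκ hK hτb hx

theorem integral_mul_integral_deriv_mul_kernel_left (hab : a ≤ b)
    (hτ : ∀ z ∈ Icc a b, HasDerivWithinAt τ (τ' z) (Icc a b) z) (hτ' : ContinuousOn τ' (Icc a b))
    (hκ : ContinuousOn κ (Icc a b))
    (hK : ∀ x ∈ Icc a b, ∀ z ∈ Icc a b, HasDerivWithinAt (K x) (-(κ x * κ z)) (Icc a b) z)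
    (hKdiag : ContinuousOn (fun x => K x x) (Icc a b)) (hτa : τ a = 0) :
    ∫ x in a..b, τ x * ∫ z in a..x, τ' z * K x z =
      (∫ x in a..b, τ x ^ 2 * K x x) + (∫ x in a..b, τ x * κ x) ^ 2 / 2 := by
  have hτ_cont : ContinuousOn τ (Icc a b) := fun x hx => (hτ x hx).continuousWithinAt
  have hτκ : ContinuousOn (fun x => τ x * κ x) (Icc a b) := hτ_cont.mul hκ
  have hdiag_int : IntervalIntegrable (fun x => τ x ^ 2 * K x x) volume a b :=
    ((hτ_cont.pow 2).mul hKdiag).intervalIntegrable_of_Icc hab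
  have htail_int : IntervalIntegrable (fun x => τ x * κ x * ∫ z in a..x, τ z * κ z) volume a b :=
    (hτκ.mul (hτκ.continuousOn_primitive hab)).intervalIntegrable_of_Icc hab
  rw [← integral_mul_integral_right_eq_sq_div_two hab hτκ, ← integral_add hdiag_int htail_int]
  refine integral_congr fun x hx => ?_
  rw [uIcc_of_le hab] at hx
  rw [integral_deriv_mul_kernel_left_eq hτ hτ' hκ hK hτa hx]
  ring

theorem integral_mul_integral_deriv_mul_kernel_right (hab : a ≤ b)
    (hτ : ∀ z ∈ Icc a b, HasDerivWithinAt τ (τ' z) (Icc a b) z) (hτ' : ContinuousOn τ' (Icc a b))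
    (hκ : ContinuousOn κ (Icc a b))
    (hK : ∀ x ∈ Icc a b, ∀ z ∈ Icc a b, HasDerivWithinAt (K x) (-(κ x * κ z)) (Icc a b) z)
    (hKdiag : ContinuousOn (fun x => K x x) (Icc a b)) (hτb : τ b = 0) :
    ∫ x in a..b, τ x * ∫ z in x..b, τ' z * K x z =
      -(∫ x in a..b, τ x ^ 2 * K x x) + (∫ x in a..b, τ x * κ x) ^ 2 / 2 := by
  have hτ_cont : ContinuousOn τ (Icc a b) := fun x hx => (hτ x hx).continuousWithinAt
  have hτκ : ContinuousOn (fun x => τ x * κ x) (Icc a b) := hτ_cont.mul hκ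
  have hdiag_int : IntervalIntegrable (fun x => -(τ x ^ 2 * K x x)) volume a b :=
    ((hτ_cont.pow 2).mul hKdiag).neg.intervalIntegrable_of_Icc hab
  have htail_int : IntervalIntegrable (fun x => τ x * κ x * ∫ z in x..b, τ z * κ z) volume a b :=
    (hτκ.mul (hτκ.continuousOn_primitive_left hab)).intervalIntegrable_of_Icc hab
  rw [← integral_mul_integral_left_eq_sq_div_two hab hτκ, ← integral_neg,
    ← integral_add hdiag_int htail_int]
  refine integral_congr fun x hx => ?_
  rw [uIcc_of_le hab] at hx
  rw [integral_deriv_mul_kernel_right_eq hτ hτ' hκ hK hτb hx]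
  ring

theorem integral_mul_integral_deriv_mul_kernel_left_nonneg (hab : a ≤ b)
    (hτ : ∀ z ∈ Icc a b, HasDerivWithinAt τ (τ' z) (Icc a b) z) (hτ' : ContinuousOn τ' (Icc a b))
    (hκ : ContinuousOn κ (Icc a b))
    (hK : ∀ x ∈ Icc a b, ∀ z ∈ Icc a b, HasDerivWithinAt (K x) (-(κ x * κ z)) (Icc a b) z)
    (hKdiag : ContinuousOn (fun x => K x x) (Icc a b)) (hKdiag_nonneg : ∀ x ∈ Icc a b, 0 ≤ K x x)
    (hτa : τ a = 0) :
    0 ≤ ∫ x in a..b, τ x * ∫ z in a..x, τ' z * K x z := by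
  rw [integral_mul_integral_deriv_mul_kernel_left hab hτ hτ' hκ hK hKdiag hτa]
  exact add_nonneg (integral_nonneg hab fun x hx => mul_nonneg (sq_nonneg _) (hKdiag_nonneg x hx))
    (by positivity)

theorem integral_mul_integral_deriv_mul_kernel_right_nonneg (hab : a ≤ b)
    (hτ : ∀ z ∈ Icc a b, HasDerivWithinAt τ (τ' z) (Icc a b) z) (hτ' : ContinuousOn τ' (Icc a b))
    (hκ : ContinuousOn κ (Icc a b))
    (hK : ∀ x ∈ Icc a b, ∀ z ∈ Icc a b, HasDerivWithinAt (K x) (-(κ x * κ z)) (Icc a b) z)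
    (hKdiag : ContinuousOn (fun x => K x x) (Icc a b)) (hKdiag_nonpos : ∀ x ∈ Icc a b, K x x ≤ 0)
    (hτb : τ b = 0) :
    0 ≤ ∫ x in a..b, τ x * ∫ z in x..b, τ' z * K x z := by
  rw [integral_mul_integral_deriv_mul_kernel_right hab hτ hτ' hκ hK hKdiag hτb, ← integral_neg]
  exact add_nonneg (integral_nonneg hab fun x hx =>
    neg_nonneg.2 (mul_nonpos_of_nonneg_of_nonpos (sq_nonneg _) (hKdiag_nonpos x hx)))
    (by positivity)

end MultiplicativeKernel

/-- Sign of the energy integral in the uniqueness proof of the homogeneous problem: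
under the multiplicative-kernel and sign conditions, the energy integral
`∫_0^l τ (γ₁τ' + γ₂∫_0^x τ'P + γ₃∫_x^l τ'Q) dx` is nonnegative. -/
theorem energy_integral_nonneg
    (l γ₁ γ₂ γ₃ : ℝ) (hl : 0 < l) (hγ₂ : 0 ≤ γ₂) (hγ₃ : 0 ≤ γ₃)
    (τ τ' : ℝ → ℝ)
    (hτ' : ∀ x ∈ Icc (0 : ℝ) l, HasDerivWithinAt τ (τ' x) (Icc 0 l) x)
    (hτ'cont : ContinuousOn τ' (Icc 0 l))
    (h0 : τ 0 = 0) (hτl : τ l = 0)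
    (P Q : ℝ → ℝ → ℝ) (P₁ Q₁ : ℝ → ℝ)
    (hPcont : ContinuousOn (fun p : ℝ × ℝ => P p.1 p.2) (Icc 0 l ×ˢ Icc 0 l))
    (hQcont : ContinuousOn (fun p : ℝ × ℝ => Q p.1 p.2) (Icc 0 l ×ˢ Icc 0 l))
    (hP₁ : ContinuousOn P₁ (Icc 0 l)) (hQ₁ : ContinuousOn Q₁ (Icc 0 l))
    (hPz : ∀ x ∈ Icc (0 : ℝ) l, ∀ z ∈ Icc (0 : ℝ) l,
      HasDerivWithinAt (fun z' => P x z') (-(P₁ x * P₁ z)) (Icc 0 l) z)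
    (hQz : ∀ x ∈ Icc (0 : ℝ) l, ∀ z ∈ Icc (0 : ℝ) l,
      HasDerivWithinAt (fun z' => Q x z') (-(Q₁ x * Q₁ z)) (Icc 0 l) z)
    (hPdiag : ∀ x ∈ Icc (0 : ℝ) l, 0 ≤ P x x)
    (hQdiag : ∀ x ∈ Icc (0 : ℝ) l, Q x x ≤ 0) :
    0 ≤ ∫ x in (0 : ℝ)..l, τ x *
      (γ₁ * τ' x + γ₂ * (∫ z in (0 : ℝ)..x, τ' z * P x z) +
        γ₃ * ∫ z in x..l, τ' z * Q x z) := by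
  have hτ_cont : ContinuousOn τ (Icc 0 l) := fun x hx => (hτ' x hx).continuousWithinAt
  have hself : ∫ x in 0..l, τ x * τ' x = 0 := by
    rw [integral_mul_deriv_self_eq hl.le hτ_cont
      (fun x hx => (hτ' x (Ioo_subset_Icc_self hx)).hasDerivAt (Icc_mem_nhds hx.1 hx.2))
      (hτ'cont.intervalIntegrable_of_Icc hl.le), h0, hτl]
    ring
  have hA : ContinuousOn (fun x => τ x * ∫ z in 0..x, τ' z * P x z) (Icc 0 l) := hτ_cont.mul
    (continuousOn_integral_deriv_mul_kernel_left hl.le hτ' hτ'cont hP₁ hPz hPcont.diag h0)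
  have hB : ContinuousOn (fun x => τ x * ∫ z in x..l, τ' z * Q x z) (Icc 0 l) := hτ_cont.mul
    (continuousOn_integral_deriv_mul_kernel_right hl.le hτ' hτ'cont hQ₁ hQz hQcont.diag hτl)
  simp only [mul_add, mul_left_comm (τ _)]
  rw [integral_add, integral_add, integral_const_mul, integral_const_mul, integral_const_mul,
    hself, mul_zero, zero_add]
  · exact add_nonneg
      (mul_nonneg hγ₂ (integral_mul_integral_deriv_mul_kernel_left_nonneg hl.le hτ' hτ'cont hP₁
        hPz hPcont.diag hPdiag h0))
      (mul_nonneg hγ₃ (integral_mul_integral_deriv_mul_kernel_right_nonneg hl.le hτ' hτ'cont hQ₁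
        hQz hQcont.diag hQdiag hτl))
  all_goals exact ContinuousOn.intervalIntegrable_of_Icc hl.le (by fun_prop)
end

section
/- Let l > 0, c > 0, γ₁ ∈ ℝ, γ₂ ≥ 0, γ₃ ≥ 0. Let τ : [0,l] → ℝ be twice continuously differentiable with τ(0) = 0 and τ(l) = 0. Let P, Q : [0,l] × [0,l] → ℝ be continuous, let P₁, Q₁ : [0,l] → ℝ be continuous, and assume that for all x, z ∈ [0,l]: ∂P/∂z(x,z) = −P₁(x)P₁(z), ∂Q/∂z(x,z) = −Q₁(x)Q₁(z), P(x,x) ≥ 0 and Q(x,x) ≤ 0. If for every x ∈ (0,l) one has c · τ''(x) = γ₁ τ'(x) + γ₂ ∫_0^x τ'(z) P(x,z) dz + γ₃ ∫_x^l τ'(z) Q(x,z) dz, then τ(x) = 0 for every x ∈ [0,l]. -/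
/-!
Write `F x = ∫₀ˣ τ P₁` and `G x = ∫ₓˡ τ Q₁`. Integrating by parts against the separable
`z`-derivatives of the kernels and using `τ 0 = τ l = 0`, the equation multiplied by `τ x` reads
`c τ τ'' = γ₁ τ τ' + γ₂ (P(x,x) τ² + τ P₁ F) + γ₃ (-Q(x,x) τ² + τ Q₁ G)`.
In differential form the energy method then says: `Λ = c τ τ' - (γ₁ τ² + γ₂ F² - γ₃ G²) / 2`
(`traceEnergy`) has derivative `c τ'² + (γ₂ P(x,x) - γ₃ Q(x,x)) τ² ≥ 0`, while `Λ l = -γ₂ F(l)² / 2` is at most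
`Λ 0 = γ₃ G(0)² / 2`. So `Λ` is constant, `τ' = 0` on `(0, l)`, and `τ = τ 0 = 0`.
-/

open Set intervalIntegral

section

variable {f f' : ℝ → ℝ} {a b : ℝ}

theorem ContinuousOn.integral_hasDerivAt_right_of_mem_Ioo (hf : ContinuousOn f (Icc a b))
    {x : ℝ} (hx : x ∈ Ioo a b) : HasDerivAt (fun u => ∫ t in a..u, f t) (f x) x :=
  integral_hasDerivAt_right
    ((hf.mono (Icc_subset_Icc_right hx.2.le)).intervalIntegrable_of_Icc hx.1.le)
    ((hf.mono Ioo_subset_Icc_self).stronglyMeasurableAtFilter isOpen_Ioo x hx)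
    (hf.continuousAt (Icc_mem_nhds hx.1 hx.2))

theorem ContinuousOn.integral_hasDerivAt_left_of_mem_Ioo (hf : ContinuousOn f (Icc a b))
    {x : ℝ} (hx : x ∈ Ioo a b) : HasDerivAt (fun u => ∫ t in u..b, f t) (-f x) x :=
  integral_hasDerivAt_left
    ((hf.mono (Icc_subset_Icc_left hx.1.le)).intervalIntegrable_of_Icc hx.2.le)
    ((hf.mono Ioo_subset_Icc_self).stronglyMeasurableAtFilter isOpen_Ioo x hx)
    (hf.continuousAt (Icc_mem_nhds hx.1 hx.2))

theorem ContinuousOn.continuousOn_primitive_Icc (hf : ContinuousOn f (Icc a b)) (hab : a ≤ b) :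
    ContinuousOn (fun x => ∫ t in a..x, f t) (Icc a b) := by
  rw [← uIcc_of_le hab] at hf ⊢
  exact continuousOn_primitive_interval hf.integrableOn_uIcc

theorem ContinuousOn.continuousOn_primitive_Icc_left (hf : ContinuousOn f (Icc a b))
    (hab : a ≤ b) : ContinuousOn (fun x => ∫ t in x..b, f t) (Icc a b) := by
  rw [← uIcc_of_le hab] at hf ⊢
  exact continuousOn_primitive_interval_left hf.integrableOn_uIcc

theorem monotoneOn_Icc_of_hasDerivAt_nonneg (hf : ContinuousOn f (Icc a b))
    (hf' : ∀ x ∈ Ioo a b, HasDerivAt f (f' x) x) (hf'₀ : ∀ x ∈ Ioo a b, 0 ≤ f' x) :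
    MonotoneOn f (Icc a b) :=
  monotoneOn_of_hasDerivWithinAt_nonneg (convex_Icc a b) hf
    (by simpa only [interior_Icc] using fun x hx => (hf' x hx).hasDerivWithinAt)
    (by simpa only [interior_Icc] using hf'₀)

theorem MonotoneOn.eq_left_of_right_le (hf : MonotoneOn f (Icc a b)) (hba : f b ≤ f a)
    {x : ℝ} (hx : x ∈ Icc a b) : f x = f a :=
  have hab : a ≤ b := hx.1.trans hx.2
  le_antisymm ((hf hx ⟨hab, le_rfl⟩ hx.2).trans hba) (hf ⟨le_rfl, hab⟩ hx hx.1)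

theorem MonotoneOn.hasDerivAt_eq_zero_of_right_le (hf : MonotoneOn f (Icc a b))
    (hba : f b ≤ f a) {x d : ℝ} (hx : x ∈ Ioo a b) (hd : HasDerivAt f d x) : d = 0 := by
  have hconst : f =ᶠ[nhds x] fun _ => f a :=
    Filter.eventually_of_mem (Icc_mem_nhds hx.1 hx.2) fun y hy => hf.eq_left_of_right_le hba hy
  exact hd.unique ((hasDerivAt_const x (f a)).congr_of_eventuallyEq hconst)

theorem integral_deriv_mul_of_hasDerivWithinAt_neg_const_mul {u u' v k : ℝ → ℝ} {m x y : ℝ}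
    (hxy : x ≤ y) (hsub : Icc x y ⊆ Icc a b)
    (hu : ∀ z ∈ Icc a b, HasDerivWithinAt u (u' z) (Icc a b) z) (hu' : ContinuousOn u' (Icc a b))
    (hv : ∀ z ∈ Icc a b, HasDerivWithinAt v (-(m * k z)) (Icc a b) z)
    (hk : ContinuousOn k (Icc a b)) :
    ∫ z in x..y, u' z * v z = u y * v y - u x * v x + m * ∫ z in x..y, u z * k z := by
  rw [← uIcc_of_le hxy] at hsub
  have hparts := integral_mul_deriv_eq_deriv_mul_of_hasDerivWithinAt
    (fun z hz => (hv z (hsub hz)).mono hsub) (fun z hz => (hu z (hsub hz)).mono hsub)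
    (continuousOn_const.mul (hk.mono hsub)).neg.intervalIntegrable (hu'.mono hsub).intervalIntegrable
  simp only [neg_mul, mul_assoc, integral_neg, integral_const_mul] at hparts
  simp only [mul_comm (u' _), mul_comm (k _), hparts]
  ring

end

noncomputable def traceEnergy (c γ₁ γ₂ γ₃ l : ℝ) (τ τ' P₁ Q₁ : ℝ → ℝ) (x : ℝ) : ℝ :=
  c * (τ x * τ' x) -
    (γ₁ * τ x ^ 2 + γ₂ * (∫ z in (0 : ℝ)..x, τ z * P₁ z) ^ 2 -
      γ₃ * (∫ z in x..l, τ z * Q₁ z) ^ 2) / 2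

section traceEnergy

variable {l c γ₁ γ₂ γ₃ : ℝ} {τ τ' τ'' P₁ Q₁ : ℝ → ℝ}

theorem continuousOn_traceEnergy (hl : 0 ≤ l) (hτ : ContinuousOn τ (Icc 0 l))
    (hτ' : ContinuousOn τ' (Icc 0 l)) (hP₁ : ContinuousOn P₁ (Icc 0 l))
    (hQ₁ : ContinuousOn Q₁ (Icc 0 l)) :
    ContinuousOn (traceEnergy c γ₁ γ₂ γ₃ l τ τ' P₁ Q₁) (Icc 0 l) := by
  have hF := (hτ.mul hP₁).continuousOn_primitive_Icc hl
  have hG := (hτ.mul hQ₁).continuousOn_primitive_Icc_left hl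
  unfold traceEnergy
  fun_prop

theorem traceEnergy_right_le_left (hγ₂ : 0 ≤ γ₂) (hγ₃ : 0 ≤ γ₃) (h0 : τ 0 = 0)
    (hτl : τ l = 0) :
    traceEnergy c γ₁ γ₂ γ₃ l τ τ' P₁ Q₁ l ≤ traceEnergy c γ₁ γ₂ γ₃ l τ τ' P₁ Q₁ 0 := by
  simp only [traceEnergy, h0, hτl, integral_same]
  nlinarith [mul_nonneg hγ₂ (sq_nonneg (∫ z in (0 : ℝ)..l, τ z * P₁ z)),
    mul_nonneg hγ₃ (sq_nonneg (∫ z in (0 : ℝ)..l, τ z * Q₁ z))]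

theorem hasDerivAt_traceEnergy {p q : ℝ → ℝ} {x : ℝ} (hx : x ∈ Ioo 0 l)
    (hτ : ∀ y ∈ Icc (0 : ℝ) l, HasDerivWithinAt τ (τ' y) (Icc 0 l) y)
    (hτ' : ∀ y ∈ Icc (0 : ℝ) l, HasDerivWithinAt τ' (τ'' y) (Icc 0 l) y)
    (h0 : τ 0 = 0) (hτl : τ l = 0)
    (hP₁ : ContinuousOn P₁ (Icc 0 l)) (hQ₁ : ContinuousOn Q₁ (Icc 0 l))
    (hp : ∀ z ∈ Icc (0 : ℝ) l, HasDerivWithinAt p (-(P₁ x * P₁ z)) (Icc 0 l) z)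
    (hq : ∀ z ∈ Icc (0 : ℝ) l, HasDerivWithinAt q (-(Q₁ x * Q₁ z)) (Icc 0 l) z)
    (heq : c * τ'' x = γ₁ * τ' x + γ₂ * (∫ z in (0 : ℝ)..x, τ' z * p z) +
      γ₃ * ∫ z in x..l, τ' z * q z) :
    HasDerivAt (traceEnergy c γ₁ γ₂ γ₃ l τ τ' P₁ Q₁)
      (c * τ' x ^ 2 + (γ₂ * p x - γ₃ * q x) * τ x ^ 2) x := by
  have hx' := Ioo_subset_Icc_self hx
  have hτc : ContinuousOn τ (Icc 0 l) := fun y hy => (hτ y hy).continuousWithinAt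
  have hτ'c : ContinuousOn τ' (Icc 0 l) := fun y hy => (hτ' y hy).continuousWithinAt
  have hτx := (hτ x hx').hasDerivAt (Icc_mem_nhds hx.1 hx.2)
  have hτ'x := (hτ' x hx').hasDerivAt (Icc_mem_nhds hx.1 hx.2)
  set F := fun y => ∫ z in (0 : ℝ)..y, τ z * P₁ z
  set G := fun y => ∫ z in y..l, τ z * Q₁ z
  have hFx : HasDerivAt F (τ x * P₁ x) x := (hτc.mul hP₁).integral_hasDerivAt_right_of_mem_Ioo hx
  have hGx : HasDerivAt G (-(τ x * Q₁ x)) x :=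
    (hτc.mul hQ₁).integral_hasDerivAt_left_of_mem_Ioo hx
  have hsq : HasDerivAt (fun y => γ₁ * τ y ^ 2 + γ₂ * F y ^ 2 - γ₃ * G y ^ 2)
      (2 * τ x * (γ₁ * τ' x + γ₂ * P₁ x * F x + γ₃ * Q₁ x * G x)) x :=
    ((((hτx.pow 2).const_mul γ₁).add ((hFx.pow 2).const_mul γ₂)).sub
      ((hGx.pow 2).const_mul γ₃)).congr_deriv (by ring)
  refine (((hτx.mul hτ'x).const_mul c).sub (hsq.div_const 2)).congr_deriv ?_
  have hp_parts := integral_deriv_mul_of_hasDerivWithinAt_neg_const_mul hx'.1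
    (Icc_subset_Icc_right hx'.2) hτ hτ'c hp hP₁
  have hq_parts := integral_deriv_mul_of_hasDerivWithinAt_neg_const_mul hx'.2
    (Icc_subset_Icc_left hx'.1) hτ hτ'c hq hQ₁
  rw [hp_parts, hq_parts, h0, hτl] at heq
  linear_combination τ x * heq

end traceEnergy

theorem trace_uniqueness_homogeneous_general
    (l c γ₁ γ₂ γ₃ : ℝ) (hl : 0 < l) (hc : 0 < c) (hγ₂ : 0 ≤ γ₂) (hγ₃ : 0 ≤ γ₃)
    (τ τ' τ'' : ℝ → ℝ)
    (hτ' : ∀ x ∈ Icc (0 : ℝ) l, HasDerivWithinAt τ (τ' x) (Icc 0 l) x)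
    (hτ'' : ∀ x ∈ Icc (0 : ℝ) l, HasDerivWithinAt τ' (τ'' x) (Icc 0 l) x)
    (h0 : τ 0 = 0) (hτl : τ l = 0)
    (P Q : ℝ → ℝ → ℝ) (P₁ Q₁ : ℝ → ℝ)
    (hP₁ : ContinuousOn P₁ (Icc 0 l)) (hQ₁ : ContinuousOn Q₁ (Icc 0 l))
    (hPz : ∀ x ∈ Icc (0 : ℝ) l, ∀ z ∈ Icc (0 : ℝ) l,
      HasDerivWithinAt (fun z' => P x z') (-(P₁ x * P₁ z)) (Icc 0 l) z)
    (hQz : ∀ x ∈ Icc (0 : ℝ) l, ∀ z ∈ Icc (0 : ℝ) l,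
      HasDerivWithinAt (fun z' => Q x z') (-(Q₁ x * Q₁ z)) (Icc 0 l) z)
    (hPdiag : ∀ x ∈ Icc (0 : ℝ) l, 0 ≤ P x x)
    (hQdiag : ∀ x ∈ Icc (0 : ℝ) l, Q x x ≤ 0)
    (heq : ∀ x ∈ Ioo (0 : ℝ) l,
      c * τ'' x = γ₁ * τ' x + γ₂ * (∫ z in (0 : ℝ)..x, τ' z * P x z) +
        γ₃ * ∫ z in x..l, τ' z * Q x z) :
    ∀ x ∈ Icc (0 : ℝ) l, τ x = 0 := by
  have hτc : ContinuousOn τ (Icc 0 l) := fun x hx => (hτ' x hx).continuousWithinAt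
  have hτ'c : ContinuousOn τ' (Icc 0 l) := fun x hx => (hτ'' x hx).continuousWithinAt
  have hE' : ∀ x ∈ Ioo 0 l, HasDerivAt (traceEnergy c γ₁ γ₂ γ₃ l τ τ' P₁ Q₁)
      (c * τ' x ^ 2 + (γ₂ * P x x - γ₃ * Q x x) * τ x ^ 2) x := fun x hx =>
    have hx' := Ioo_subset_Icc_self hx
    hasDerivAt_traceEnergy hx hτ' hτ'' h0 hτl hP₁ hQ₁ (hPz x hx') (hQz x hx') (heq x hx)
  have hdiag : ∀ x ∈ Ioo 0 l, 0 ≤ γ₂ * P x x - γ₃ * Q x x := fun x hx => by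
    linarith [mul_nonneg hγ₂ (hPdiag x (Ioo_subset_Icc_self hx)),
      mul_nonneg hγ₃ (neg_nonneg.2 (hQdiag x (Ioo_subset_Icc_self hx)))]
  have hEmono := monotoneOn_Icc_of_hasDerivAt_nonneg
    (continuousOn_traceEnergy hl.le hτc hτ'c hP₁ hQ₁) hE' fun x hx => by
      have := hdiag x hx
      positivity
  have hτ'0 : ∀ x ∈ Ioo 0 l, τ' x = 0 := fun x hx => by
    have hE'0 := hEmono.hasDerivAt_eq_zero_of_right_le
      (traceEnergy_right_le_left hγ₂ hγ₃ h0 hτl) hx (hE' x hx)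
    have := mul_nonneg (hdiag x hx) (sq_nonneg (τ x))
    have : τ' x ^ 2 = 0 := by nlinarith [sq_nonneg (τ' x)]
    exact pow_eq_zero_iff two_ne_zero |>.1 this
  have hτmono := monotoneOn_Icc_of_hasDerivAt_nonneg hτc
    (fun x hx => (hτ' x (Ioo_subset_Icc_self hx)).hasDerivAt (Icc_mem_nhds hx.1 hx.2))
    fun x hx => (hτ'0 x hx).ge
  intro x hx
  rw [hτmono.eq_left_of_right_le (by rw [h0, hτl]) hx, h0]

/-- Uniqueness of the trace on the type-changing line for the homogeneous problem:
if `c τ'' = γ₁τ' + γ₂∫_0^x τ'P + γ₃∫_x^l τ'Q` on `(0,l)` with `τ(0) = τ(l) = 0`,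
multiplicative kernels and the diagonal sign conditions, then `τ ≡ 0` on `[0,l]`. -/
theorem trace_uniqueness_homogeneous
    (l c γ₁ γ₂ γ₃ : ℝ) (hl : 0 < l) (hc : 0 < c) (hγ₂ : 0 ≤ γ₂) (hγ₃ : 0 ≤ γ₃)
    (τ τ' τ'' : ℝ → ℝ)
    (hτ' : ∀ x ∈ Icc (0 : ℝ) l, HasDerivWithinAt τ (τ' x) (Icc 0 l) x)
    (hτ'' : ∀ x ∈ Icc (0 : ℝ) l, HasDerivWithinAt τ' (τ'' x) (Icc 0 l) x)
    (hτ''cont : ContinuousOn τ'' (Icc 0 l))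
    (h0 : τ 0 = 0) (hτl : τ l = 0)
    (P Q : ℝ → ℝ → ℝ) (P₁ Q₁ : ℝ → ℝ)
    (hPcont : ContinuousOn (fun p : ℝ × ℝ => P p.1 p.2) (Icc 0 l ×ˢ Icc 0 l))
    (hQcont : ContinuousOn (fun p : ℝ × ℝ => Q p.1 p.2) (Icc 0 l ×ˢ Icc 0 l))
    (hP₁ : ContinuousOn P₁ (Icc 0 l)) (hQ₁ : ContinuousOn Q₁ (Icc 0 l))
    (hPz : ∀ x ∈ Icc (0 : ℝ) l, ∀ z ∈ Icc (0 : ℝ) l,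
      HasDerivWithinAt (fun z' => P x z') (-(P₁ x * P₁ z)) (Icc 0 l) z)
    (hQz : ∀ x ∈ Icc (0 : ℝ) l, ∀ z ∈ Icc (0 : ℝ) l,
      HasDerivWithinAt (fun z' => Q x z') (-(Q₁ x * Q₁ z)) (Icc 0 l) z)
    (hPdiag : ∀ x ∈ Icc (0 : ℝ) l, 0 ≤ P x x)
    (hQdiag : ∀ x ∈ Icc (0 : ℝ) l, Q x x ≤ 0)
    (heq : ∀ x ∈ Ioo (0 : ℝ) l,
      c * τ'' x = γ₁ * τ' x + γ₂ * (∫ z in (0 : ℝ)..x, τ' z * P x z) +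
        γ₃ * ∫ z in x..l, τ' z * Q x z) :
    ∀ x ∈ Icc (0 : ℝ) l, τ x = 0 :=
  trace_uniqueness_homogeneous_general l c γ₁ γ₂ γ₃ hl hc hγ₂ hγ₃ τ τ' τ'' hτ' hτ'' h0 hτl P Q P₁ Q₁
    hP₁ hQ₁ hPz hQz hPdiag hQdiag heq
end
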